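/- arXiv:1503.01632 — 5 statements merged into one kernel-verified Lean document; each statement's English description precedes it below -/
import Mathlib

section
/- If w is a right-infinite word that is the fixed point of a monoid morphism φ prolongable on the letter b (i.e., φ(b) = b·x with x nonempty and w = b·x·φ(x)·φ²(x)···), and the letter b occurs at least twice in w, then for any two finite subwords v and v' of w there exists a word u such that v·u·v' is a subword of w. -/
/-- A monoid morphism applied to a word. -/
def applyM {α : Type*} (φ : α → List α) (u : List α) : List α := u.flatMap φ

/-- The block of `len` consecutive letters of `w` starting at position `i`. -/
def toListW {α : Type*} (w : ℕ → α) (i len : ℕ) : List α :=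
  (List.range len).map fun k => w (i + k)

/-- `v` is a factor (subword) of the right-infinite word `w`. -/
def IsFactor {α : Type*} (v : List α) (w : ℕ → α) : Prop :=
  ∃ i, toListW w i v.length = v

/-- `v` is a prefix of the right-infinite word `w`. -/
def IsPrefixW {α : Type*} (v : List α) (w : ℕ → α) : Prop :=
  toListW w 0 v.length = v

lemma toListW_length {α : Type*} (w : ℕ → α) (i n : ℕ) : (toListW w i n).length = n := by
  simp [toListW]

lemma toListW_append {α : Type*} (w : ℕ → α) (i a c : ℕ) :
    toListW w i (a + c) = toListW w i a ++ toListW w (i + a) c := by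
  simp only [toListW, List.range_add, List.map_append, List.map_map]
  congr 1
  ext k
  simp [Function.comp, add_assoc]

lemma toListW_eq_of_pointwise {α : Type*} (w : ℕ → α) {a c n : ℕ}
    (h : ∀ t < n, w (a + t) = w (c + t)) : toListW w a n = toListW w c n := by
  simp only [toListW]
  exact List.map_congr_left fun t ht => h t (List.mem_range.mp ht)

lemma pointwise_of_toListW_eq {α : Type*} (w : ℕ → α) {a c n : ℕ}
    (h : toListW w a n = toListW w c n) : ∀ t < n, w (a + t) = w (c + t) := by
  intro t ht
  have h1 : (toListW w a n)[t]'(by simp [toListW_length, ht]) =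
      (toListW w c n)[t]'(by simp [toListW_length, ht]) := by
    simp [h]
  simpa [toListW] using h1

lemma applyM_append {α : Type*} (φ : α → List α) (u v : List α) :
    applyM φ (u ++ v) = applyM φ u ++ applyM φ v := by
  simp [applyM]

lemma applyM_iter_append {α : Type*} (φ : α → List α) (k : ℕ) (u v : List α) :
    (applyM φ)^[k] (u ++ v) = (applyM φ)^[k] u ++ (applyM φ)^[k] v := by
  induction k generalizing u v with
  | zero => simp
  | succ k ih => simp [Function.iterate_succ_apply, applyM_append, ih]

theorem stmt0 {α : Type*} (φ : α → List α) (b : α) (x : List α)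
    (hx : x ≠ []) (hb : φ b = b :: x)
    (w : ℕ → α)
    (hpref : ∀ n : ℕ, IsPrefixW ((applyM φ)^[n] [b]) w)
    (hlen : ∀ N : ℕ, ∃ n : ℕ, N ≤ ((applyM φ)^[n] [b]).length)
    (htwice : ∃ i j : ℕ, i < j ∧ w i = b ∧ w j = b)
    (v v' : List α) (hv : IsFactor v w) (hv' : IsFactor v' w) :
    ∃ u : List α, IsFactor (v ++ u ++ v') w := by
  classical
  -- split lemma: a prefix decomposition gives factor occurrences
  have split : ∀ (s t : List α), IsPrefixW (s ++ t) w →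
      IsPrefixW s w ∧ toListW w s.length t.length = t := by
    intro s t h
    unfold IsPrefixW at h
    rw [List.length_append, toListW_append] at h
    have hs := List.append_inj h (by simp [toListW_length])
    exact ⟨hs.1, by simpa using hs.2⟩
  -- prefixes of w are closed under applyM
  have stepPref : ∀ q : List α, IsPrefixW q w → IsPrefixW (applyM φ q) w := by
    intro q hq
    obtain ⟨n, hn⟩ := hlen q.length
    obtain ⟨d, hd⟩ := Nat.exists_eq_add_of_le hn
    have hPn := hpref n
    unfold IsPrefixW at hPn
    rw [hd, toListW_append, zero_add, hq] at hPn
    have hnext := hpref (n + 1)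
    rw [Function.iterate_succ_apply', ← hPn, applyM_append] at hnext
    exact (split _ _ hnext).1
  have iterPref : ∀ (k : ℕ) (q : List α), IsPrefixW q w → IsPrefixW ((applyM φ)^[k] q) w := by
    intro k
    induction k with
    | zero => intro q hq; simpa using hq
    | succ k ih =>
      intro q hq
      rw [Function.iterate_succ_apply']
      exact stepPref _ (ih q hq)
  obtain ⟨i0, j, hij, hwi0, hwj⟩ := htwice
  have hw0 : w 0 = b := by
    have h0 := hpref 0
    unfold IsPrefixW at h0
    simp only [Function.iterate_zero, id_eq, List.length_singleton] at h0
    have h1 : (toListW w 0 1)[0]'(by simp [toListW_length]) = b := by simp [h0]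
    simpa [toListW] using h1
  have hj1 : 1 ≤ j := by omega
  -- the prefix of length j+1 is [b] ++ p' ++ [b]
  set p' : List α := toListW w 1 (j - 1) with hp'
  have hq0 : IsPrefixW ([b] ++ p' ++ [b]) w := by
    unfold IsPrefixW
    have hlen0 : ([b] ++ p' ++ [b]).length = 1 + (j - 1) + 1 := by
      simp only [List.length_append, List.length_singleton, hp', toListW_length]
    rw [hlen0, toListW_append, toListW_append]
    congr 1
    · congr 1
      · simp [toListW, List.range_succ, hw0]
    · have h2 : 0 + (1 + (j - 1)) = j := by omega
      rw [h2]
      simp [toListW, List.range_succ, hwj]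
  -- occurrence lemma: every factor occurs at arbitrarily late positions
  have occ : ∀ (N : ℕ) (y : List α), IsFactor y w → ∃ c, N ≤ c ∧ toListW w c y.length = y := by
    intro N y hy
    obtain ⟨i', hi'⟩ := hy
    obtain ⟨k, hk⟩ := hlen (max N (i' + y.length))
    have hQk : IsPrefixW ((applyM φ)^[k] ([b] ++ p' ++ [b])) w := iterPref k _ hq0
    rw [applyM_iter_append, applyM_iter_append] at hQk
    set A := (applyM φ)^[k] [b] with hA
    set S := (applyM φ)^[k] p' with hS
    have h1 := (split (A ++ S) A hQk).2
    have h0 : toListW w 0 A.length = A := hpref k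
    have hpt : ∀ t < A.length, w ((A ++ S).length + t) = w (0 + t) :=
      pointwise_of_toListW_eq w (h1.trans h0.symm)
    have hkA : max N (i' + y.length) ≤ A.length := hk
    refine ⟨(A ++ S).length + i', ?_, ?_⟩
    · have : N ≤ A.length := le_trans (le_max_left _ _) hkA
      simp only [List.length_append]
      omega
    · have heq : toListW w ((A ++ S).length + i') y.length = toListW w i' y.length := by
        apply toListW_eq_of_pointwise
        intro t ht
        have hlt : i' + t < A.length := by
          have := le_trans (le_max_right _ _) hkA
          omega
        have := hpt (i' + t) hlt
        simpa [add_assoc] using this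
      rw [heq, hi']
  -- assemble
  obtain ⟨i, hi⟩ := hv
  obtain ⟨c, hcge, hc⟩ := occ (i + v.length) v' hv'
  set d := c - (i + v.length) with hd
  refine ⟨toListW w (i + v.length) d, i, ?_⟩
  have hlen2 : (v ++ toListW w (i + v.length) d ++ v').length = v.length + d + v'.length := by
    simp only [List.length_append, toListW_length]
  rw [hlen2, toListW_append, toListW_append, hi]
  have h3 : i + (v.length + d) = c := by omega
  rw [h3, hc]
end

section
/- Let w be a right-infinite word over a finite alphabet Σ and let A_w = k{Σ}/I where I is the ideal generated by all finite words over Σ not occurring as subwords of w. If the first letter b of w occurs exactly once in w, then the two-sided ideal of A_w generated by the image of b is nilpotent (indeed squares to zero), so A_w is not semiprime. -/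
/-- The relation on the free algebra identifying with `0` every monomial
corresponding to a finite word that is not a factor of `w`. -/
def relOf (k : Type*) [Field k] {α : Type*} (w : ℕ → α) :
    FreeAlgebra k α → FreeAlgebra k α → Prop :=
  fun p q => q = 0 ∧ ∃ v : List α, ¬ IsFactor v w ∧ p = (v.map (FreeAlgebra.ι k)).prod

/-- The monomial algebra `A_w = k{Σ}/I`. -/
abbrev Aw (k : Type*) [Field k] {α : Type*} (w : ℕ → α) : Type _ := RingQuot (relOf k w)

section Aux

variable (k : Type*) [Field k] {α : Type*} (w : ℕ → α)

lemma toListW_getElem? (i len j : ℕ) (hj : j < len) :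
    (toListW w i len)[j]? = some (w (i + j)) := by
  simp [toListW, hj]

lemma monomial_mem_span (p : FreeAlgebra k α) :
    p ∈ Submodule.span k (Set.range fun v : List α => (v.map (FreeAlgebra.ι k)).prod) := by
  set M : Set (FreeAlgebra k α) :=
    Set.range fun v : List α => (v.map (FreeAlgebra.ι k)).prod with hM
  have hmul : ∀ x ∈ Submodule.span k M, ∀ y ∈ Submodule.span k M,
      x * y ∈ Submodule.span k M := by
    intro x hx y hy
    induction hx using Submodule.span_induction with
    | mem x hxm =>
      induction hy using Submodule.span_induction with
      | mem y hym =>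
        obtain ⟨v, rfl⟩ := hxm
        obtain ⟨u, rfl⟩ := hym
        refine Submodule.subset_span ⟨v ++ u, ?_⟩
        simp
      | zero => simp
      | add a b _ _ ha hb => rw [mul_add]; exact Submodule.add_mem _ ha hb
      | smul c a _ ha => rw [mul_smul_comm]; exact Submodule.smul_mem _ _ ha
    | zero => simp
    | add a b _ _ ha hb => rw [add_mul]; exact Submodule.add_mem _ ha hb
    | smul c a _ ha => rw [smul_mul_assoc]; exact Submodule.smul_mem _ _ ha
  induction p using FreeAlgebra.induction with
  | grade0 r =>
    have h1 : (1 : FreeAlgebra k α) ∈ M := ⟨[], by simp⟩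
    have : algebraMap k (FreeAlgebra k α) r = r • 1 := (Algebra.algebraMap_eq_smul_one r)
    rw [this]
    exact Submodule.smul_mem _ _ (Submodule.subset_span h1)
  | grade1 x => exact Submodule.subset_span ⟨[x], by simp⟩
  | mul a b ha hb => exact hmul _ ha _ hb
  | add a b ha hb => exact Submodule.add_mem _ ha hb

lemma mk_monomial_eq_zero {v : List α} (hv : ¬ IsFactor v w) :
    RingQuot.mkAlgHom k (relOf k w) ((v.map (FreeAlgebra.ι k)).prod) = 0 := by
  have := RingQuot.mkAlgHom_rel (S := k)
    (s := relOf k w) (x := (v.map (FreeAlgebra.ι k)).prod) (y := 0) ⟨rfl, v, hv, rfl⟩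
  simpa using this

lemma not_factor_bvb (honce : ∀ i : ℕ, w i = w 0 → i = 0) (v : List α) :
    ¬ IsFactor (w 0 :: v ++ [w 0]) w := by
  rintro ⟨i, h⟩
  have hlen : (w 0 :: v ++ [w 0]).length = v.length + 2 := by simp
  have h0 : w (i + 0) = w 0 := by
    have h1 : (w 0 :: v ++ [w 0])[0]? = some (w (i + 0)) := by
      rw [← h]; exact toListW_getElem? w i _ 0 (by simp)
    simpa using h1.symm
  have hlast : w (i + (v.length + 1)) = w 0 := by
    have h1 : (w 0 :: v ++ [w 0])[v.length + 1]? = some (w (i + (v.length + 1))) := by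
      rw [← h]; exact toListW_getElem? w i _ (v.length + 1) (by simp)
    have h2 : (w 0 :: v ++ [w 0])[v.length + 1]? = some (w 0) := by
      have : (w 0 :: v ++ [w 0]) = (w 0 :: v) ++ [w 0] := by simp
      rw [this, List.getElem?_append_right (by simp)]
      simp
    rw [h2] at h1
    exact (Option.some.inj h1).symm
  have hi0 : i = 0 := honce i (by simpa using h0)
  have := honce (i + (v.length + 1)) hlast
  omega

lemma key_bzb (honce : ∀ i : ℕ, w i = w 0 → i = 0) (z : Aw k w) :
    RingQuot.mkAlgHom k (relOf k w) (FreeAlgebra.ι k (w 0)) * z *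
      RingQuot.mkAlgHom k (relOf k w) (FreeAlgebra.ι k (w 0)) = 0 := by
  obtain ⟨p, rfl⟩ := RingQuot.mkAlgHom_surjective k (relOf k w) z
  have hp := monomial_mem_span k p
  induction hp using Submodule.span_induction with
  | mem x hx =>
    obtain ⟨v, rfl⟩ := hx
    rw [← map_mul, ← map_mul]
    have : FreeAlgebra.ι k (w 0) * (v.map (FreeAlgebra.ι k)).prod * FreeAlgebra.ι k (w 0)
        = ((w 0 :: v ++ [w 0]).map (FreeAlgebra.ι k)).prod := by
      simp [mul_assoc]
    rw [this]
    exact mk_monomial_eq_zero k w (not_factor_bvb w honce v)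
  | zero => simp
  | add a b _ _ ha hb => rw [map_add, mul_add, add_mul, ha, hb, add_zero]
  | smul c a _ ha => rw [map_smul, mul_smul_comm, smul_mul_assoc, ha, smul_zero]

open Classical in
/-- Evaluation sending the special letter to the dual number `ε` and everything else to `0`. -/
noncomputable def evalEps : FreeAlgebra k α →ₐ[k] DualNumber k :=
  FreeAlgebra.lift k (fun x => if x = w 0 then (DualNumber.eps : DualNumber k) else 0)

lemma evalEps_rel : ∀ ⦃p q : FreeAlgebra k α⦄, relOf k w p q → evalEps k w p = evalEps k w q := by
  rintro p q ⟨rfl, v, hv, rfl⟩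
  rw [map_zero]
  match v with
  | [] =>
    exact absurd ⟨0, by simp [toListW]⟩ hv
  | [c] =>
    by_cases hc : c = w 0
    · subst hc
      exact absurd ⟨0, by simp [toListW, List.range_succ]⟩ hv
    · have : (([c].map (FreeAlgebra.ι k)).prod) = FreeAlgebra.ι k c := by simp
      rw [this]
      simp only [evalEps, FreeAlgebra.lift_ι_apply]
      rw [if_neg hc]
  | c1 :: c2 :: t =>
    have : ((c1 :: c2 :: t).map (FreeAlgebra.ι k)).prod
        = FreeAlgebra.ι k c1 * FreeAlgebra.ι k c2 * (t.map (FreeAlgebra.ι k)).prod := by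
      simp [mul_assoc]
    rw [this, map_mul, map_mul]
    have h2 : evalEps k w (FreeAlgebra.ι k c1) * evalEps k w (FreeAlgebra.ι k c2) = 0 := by
      simp only [evalEps, FreeAlgebra.lift_ι_apply]
      split_ifs <;> simp [DualNumber.eps_mul_eps]
    rw [h2, zero_mul]

lemma mk_iota_ne_zero : RingQuot.mkAlgHom k (relOf k w) (FreeAlgebra.ι k (w 0)) ≠ 0 := by
  intro h
  have := congrArg (RingQuot.liftAlgHom k ⟨evalEps k w, evalEps_rel k w⟩) h
  rw [RingQuot.liftAlgHom_mkAlgHom_apply, map_zero] at this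
  have heps : evalEps k w (FreeAlgebra.ι k (w 0)) = DualNumber.eps := by
    simp only [evalEps, FreeAlgebra.lift_ι_apply]
    simp only [if_true]
  rw [heps] at this
  have h2 : (DualNumber.eps : DualNumber k).snd = 0 := by rw [this]; simp
  rw [DualNumber.eps, TrivSqZeroExt.snd_inr] at h2
  exact one_ne_zero h2

end Aux

theorem stmt1 (k : Type*) [Field k] {α : Type*} (w : ℕ → α)
    (honce : ∀ i : ℕ, w i = w 0 → i = 0) :
    (∀ x ∈ TwoSidedIdeal.span {RingQuot.mkAlgHom k (relOf k w) (FreeAlgebra.ι k (w 0))},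
      ∀ y ∈ TwoSidedIdeal.span {RingQuot.mkAlgHom k (relOf k w) (FreeAlgebra.ι k (w 0))},
        x * y = 0) ∧
    ¬ (∀ a : Aw k w, (∀ r : Aw k w, a * r * a = 0) → a = 0) := by
  set B : Aw k w := RingQuot.mkAlgHom k (relOf k w) (FreeAlgebra.ι k (w 0)) with hB
  have key := key_bzb k w honce
  -- every element of the span is annihilated on the left by `B * z * ·`
  have hT : ∀ x ∈ TwoSidedIdeal.span {B}, ∀ z : Aw k w, B * z * x = 0 := by
    intro x hx
    let T : TwoSidedIdeal (Aw k w) := TwoSidedIdeal.mk'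
      {x : Aw k w | ∀ z : Aw k w, B * z * x = 0}
      (fun z => by simp)
      (fun {a b} ha hb z => by rw [mul_add, ha z, hb z, add_zero])
      (fun {a} ha z => by
        have e : B * z * -a = -(B * z * a) := by with_unfolding_all exact mul_neg (B * z) a
        have e2 : -(0 : Aw k w) = 0 := by with_unfolding_all exact neg_zero
        rw [e, ha z, e2])
      (fun {r a} ha z => by
        rw [show B * z * (r * a) = B * (z * r) * a by simp only [mul_assoc], ha (z * r)])
      (fun {a r} ha z => by
        rw [show B * z * (a * r) = B * z * a * r by simp only [mul_assoc], ha z, zero_mul])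
    have hBT : B ∈ T := by
      rw [TwoSidedIdeal.mem_mk']
      exact fun z => key z
    have := TwoSidedIdeal.mem_span_iff.mp hx T (by simpa using hBT)
    rwa [TwoSidedIdeal.mem_mk'] at this
  constructor
  · intro x hx y hy
    let S : TwoSidedIdeal (Aw k w) := TwoSidedIdeal.mk'
      {x : Aw k w | ∀ y ∈ TwoSidedIdeal.span {B}, x * y = 0}
      (fun y _ => by simp)
      (fun {a b} ha hb y hy => by rw [add_mul, ha y hy, hb y hy, add_zero])
      (fun {a} ha y hy => by
        have e : -a * y = -(a * y) := by with_unfolding_all exact neg_mul a y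
        have e2 : -(0 : Aw k w) = 0 := by with_unfolding_all exact neg_zero
        rw [e, ha y hy, e2])
      (fun {r a} ha y hy => by rw [mul_assoc, ha y hy, mul_zero])
      (fun {a r} ha y hy => by
        rw [mul_assoc]
        exact ha (r * y) ((TwoSidedIdeal.span {B}).mul_mem_left r y hy))
    have hBS : B ∈ S := by
      rw [TwoSidedIdeal.mem_mk']
      intro y hy
      have := hT y hy 1
      rwa [mul_one] at this
    have hxS : x ∈ S := TwoSidedIdeal.mem_span_iff.mp hx S (by simpa using hBS)
    rw [TwoSidedIdeal.mem_mk'] at hxS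
    exact hxS y hy
  · intro h
    exact mk_iota_ne_zero k w (h B (fun r => key r))
end

section
/- Let w be the fixed point of the morphism φ from the construction. If x_i y_j is a factor of w (with i ∈ {1,…,6}, j ∈ {1,…,6}), then y_j x_i is not a factor of w. -/
/-- The 12-letter alphabet `{x₁,…,x₆,y₁,…,y₆}`: `(false, i)` is `x_{i+1}`
and `(true, j)` is `y_{j+1}`. -/
abbrev Letter : Type := Bool × Fin 6

/-- The letter `x_{i+1}`. -/
def X (i : Fin 6) : Letter := (false, i)

/-- The letter `y_{j+1}`. -/
def Y (j : Fin 6) : Letter := (true, j)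

/-- The morphism of the construction: `x₁↦x₁x₂y₁y₂, x₂↦x₁x₃y₁y₃, x₃↦x₁x₄y₁y₄,
x₄↦x₁x₅y₁y₅, x₅↦x₁x₆y₁y₆, x₆↦x₂x₃y₂y₃, y₁↦x₂x₄y₂y₅, y₂↦x₂x₅y₃y₄, y₃↦x₂x₆y₂y₆,
y₄↦x₃x₄y₃y₅, y₅↦x₃x₅y₃y₆, y₆↦x₃x₆y₄y₅`. -/
def phi : Letter → List Letter := fun a =>
  [[X 0, X 1, Y 0, Y 1], [X 0, X 2, Y 0, Y 2], [X 0, X 3, Y 0, Y 3],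
   [X 0, X 4, Y 0, Y 4], [X 0, X 5, Y 0, Y 5], [X 1, X 2, Y 1, Y 2],
   [X 1, X 3, Y 1, Y 4], [X 1, X 4, Y 2, Y 3], [X 1, X 5, Y 1, Y 5],
   [X 2, X 3, Y 2, Y 4], [X 2, X 4, Y 2, Y 5], [X 2, X 5, Y 3, Y 4]].getD
    ((if a.1 then 6 else 0) + a.2.val) []

/-- `w` is the fixed point `φ^ω(x₁)` of the (4-uniform) morphism `phi`:
for every `n`, `phi^n(x₁)` (a word of length `4^n`) is a prefix of `w`. -/
def IsFixedPointWord (w : ℕ → Letter) : Prop :=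
  ∀ n : ℕ, toListW w 0 (4 ^ n) = (applyM phi)^[n] [X 0]

/-! Since `φ` is uniform and `w = φ(w)`, every pair of adjacent letters of `w` lies inside
`φ(x₁)` or inside `φ(a)φ(b)` for an adjacent pair `ab` occurring earlier in `w`. So every
relation that holds along `φ(x₁)`, and along `φ(a)φ(b)` whenever it holds for `ab`, holds for all
adjacent pairs of `w`. The relation `b ∈ followers a` (which is exactly adjacency in `w`) has this
property, and it never relates both `xᵢ` to `yⱼ` and `yⱼ` to `xᵢ`. -/

open List

section FixedPoint

variable {α : Type*}

lemma toListW_add (w : ℕ → α) (i m n : ℕ) :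
    toListW w i (m + n) = toListW w i m ++ toListW w (i + m) n := by
  simp [toListW, List.range_add, add_assoc]

lemma length_toListW (w : ℕ → α) (i n : ℕ) : (toListW w i n).length = n := by
  simp [toListW]

lemma List.IsChain.rel_of_toListW {R : α → α → Prop} {w : ℕ → α} {i n : ℕ}
    (h : IsChain R (toListW w i n)) {t : ℕ} (ht : t + 1 < n) :
    R (w (i + t)) (w (i + t + 1)) := by
  simpa [toListW, add_assoc] using h.getElem t (by simpa [toListW] using ht)

lemma isFactor_pair_iff {a b : α} {w : ℕ → α} :
    IsFactor [a, b] w ↔ ∃ m, w m = a ∧ w (m + 1) = b := by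
  simp [IsFactor, toListW, List.range_succ]

variable {φ : α → List α} {k : ℕ}

lemma length_applyM (hφ : ∀ a, (φ a).length = k) (u : List α) :
    (applyM φ u).length = k * u.length := by
  simp [applyM, hφ, mul_comm]

variable {w : ℕ → α} {a₀ : α}

lemma toListW_mul_eq_applyM (hφ : ∀ a, (φ a).length = k) (hk : 2 ≤ k)
    (hw : ∀ n, toListW w 0 (k ^ n) = (applyM φ)^[n] [a₀]) (n : ℕ) :
    toListW w 0 (k * n) = applyM φ (toListW w 0 n) := by
  obtain ⟨d, hd⟩ : ∃ d, k ^ n = n + d := Nat.exists_eq_add_of_le (Nat.lt_pow_self hk).le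
  have h := hw (n + 1)
  rw [Function.iterate_succ_apply', ← hw n, pow_succ', hd, mul_add, toListW_add, toListW_add,
    applyM, flatMap_append] at h
  exact (append_inj h (by rw [length_toListW, ← applyM, length_applyM hφ, length_toListW])).1

lemma toListW_mul_eq_image (hφ : ∀ a, (φ a).length = k) (hk : 2 ≤ k)
    (hw : ∀ n, toListW w 0 (k ^ n) = (applyM φ)^[n] [a₀]) (q : ℕ) :
    toListW w (k * q) k = φ (w q) := by
  have h := toListW_mul_eq_applyM hφ hk hw (q + 1)
  rw [mul_add_one, toListW_add, toListW_add, applyM, flatMap_append, ← applyM,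
    ← toListW_mul_eq_applyM hφ hk hw q, zero_add, zero_add] at h
  simpa [toListW] using h

lemma apply_zero_of_fixedPoint (hw : ∀ n, toListW w 0 (k ^ n) = (applyM φ)^[n] [a₀]) :
    w 0 = a₀ := by
  simpa [toListW] using hw 0

theorem rel_apply_succ_of_isChain_append {R : α → α → Prop} (hφ : ∀ a, (φ a).length = k) (hk : 2 ≤ k)
    (hw : ∀ n, toListW w 0 (k ^ n) = (applyM φ)^[n] [a₀])
    (hR : ∀ a b, R a b → IsChain R (φ a ++ φ b)) (h₀ : IsChain R (φ a₀)) (m : ℕ) :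
    R (w m) (w (m + 1)) := by
  induction m using Nat.strong_induction_on with
  | _ m ih =>
    obtain rfl | hm := Nat.eq_zero_or_pos m
    · rw [← apply_zero_of_fixedPoint hw, ← toListW_mul_eq_image hφ hk hw 0, mul_zero] at h₀
      simpa using h₀.rel_of_toListW (t := 0) (by omega)
    have hq : m / k < m := Nat.div_lt_self hm (by omega)
    have hchain := hR _ _ (ih _ hq)
    rw [← toListW_mul_eq_image hφ hk hw, ← toListW_mul_eq_image hφ hk hw, mul_add_one,
      ← toListW_add] at hchain
    have hr : m % k + 1 < k + k := by have := Nat.mod_lt m (by omega : 0 < k); omega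
    simpa [Nat.div_add_mod] using hchain.rel_of_toListW hr

end FixedPoint

def followers : Letter → List Letter
  | (false, 0) => [X 1, X 2, X 3, X 4, X 5]
  | (false, 1) => [X 2, X 3, X 4, X 5, Y 0]
  | (false, 2) => [X 3, X 4, X 5, Y 0, Y 1]
  | (false, 3) => [Y 0, Y 1, Y 2]
  | (false, 4) => [Y 0, Y 2]
  | (false, 5) => [Y 0, Y 1, Y 3]
  | (true, 0) => [Y 1, Y 2, Y 3, Y 4, Y 5]
  | (true, 1) => [X 0, X 1, Y 2, Y 4, Y 5]
  | (true, 2) => [X 0, X 1, X 2, Y 3, Y 4, Y 5]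
  | (true, 3) => [X 0, X 1, X 2, Y 4]
  | (true, 4) => [X 0, X 1, X 2]
  | (true, 5) => [X 0, X 1, X 2]

def Follows (a b : Letter) : Prop := b ∈ followers a

instance : DecidableRel Follows := fun a b => inferInstanceAs (Decidable (b ∈ followers a))

lemma length_phi : ∀ a, (phi a).length = 4 := by decide

lemma isChain_phi_X_zero : IsChain Follows (phi (X 0)) := by decide

lemma isChain_phi_append_phi : ∀ a b, Follows a b → IsChain Follows (phi a ++ phi b) := by
  decide

lemma not_follows_X_of_follows_Y : ∀ i j, Follows (X i) (Y j) → ¬ Follows (Y j) (X i) := by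
  decide

theorem stmt7 (w : ℕ → Letter) (hw : IsFixedPointWord w)
    (i j : Fin 6) (h : IsFactor [X i, Y j] w) :
    ¬ IsFactor [Y j, X i] w := by
  intro h'
  obtain ⟨m, hXm, hYm⟩ := isFactor_pair_iff.1 h
  obtain ⟨n, hYn, hXn⟩ := isFactor_pair_iff.1 h'
  have hfollows := rel_apply_succ_of_isChain_append length_phi (by norm_num) hw
    isChain_phi_append_phi isChain_phi_X_zero
  exact not_follows_X_of_follows_Y i j (hXm ▸ hYm ▸ hfollows m) (hYn ▸ hXn ▸ hfollows n)
end

section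
/- Let w be the fixed point of the morphism φ from the construction. Then every factor v of w of length exactly 2 has some cyclic permutation that is not a factor of w. -/
def S : List (Letter × Letter) := [((false,0),(false,1)),
  ((false,0),(false,2)), ((false,0),(false,3)), ((false,0),(false,4)),
  ((false,0),(false,5)), ((false,1),(false,2)), ((false,1),(false,3)),
  ((false,1),(false,4)), ((false,1),(false,5)), ((false,1),(true,0)),
  ((false,2),(false,3)), ((false,2),(false,4)), ((false,2),(false,5)),
  ((false,2),(true,0)), ((false,2),(true,1)), ((false,3),(true,0)),
  ((false,3),(true,1)), ((false,3),(true,2)), ((false,4),(true,0)),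
  ((false,4),(true,2)), ((false,5),(true,0)), ((false,5),(true,1)),
  ((false,5),(true,3)), ((true,0),(true,1)), ((true,0),(true,2)),
  ((true,0),(true,3)), ((true,0),(true,4)), ((true,0),(true,5)),
  ((true,1),(false,0)), ((true,1),(false,1)), ((true,1),(true,2)),
  ((true,1),(true,4)), ((true,1),(true,5)), ((true,2),(false,0)),
  ((true,2),(false,1)), ((true,2),(false,2)), ((true,2),(true,3)),
  ((true,2),(true,4)), ((true,2),(true,5)), ((true,3),(false,0)),
  ((true,3),(false,1)), ((true,3),(false,2)), ((true,3),(true,4)),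
  ((true,4),(false,0)), ((true,4),(false,1)), ((true,4),(false,2)),
  ((true,5),(false,0)), ((true,5),(false,1)), ((true,5),(false,2))]

def R (a b : Letter) : Prop := (a, b) ∈ S

instance (a b : Letter) : Decidable (R a b) := inferInstanceAs (Decidable ((a,b) ∈ S))

lemma chain_phi : ∀ a : Letter, List.Chain' R (phi a) := by
  intro a
  fin_cases a <;>
    exact List.Chain.cons (by decide) (List.Chain.cons (by decide)
      (List.Chain.cons (by decide) List.Chain.nil))

set_option maxRecDepth 10000 in
lemma closure_S : ∀ p ∈ S, ((phi p.1).getLastD (X 0), (phi p.2).headD (X 0)) ∈ S := by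
  decide

lemma antisym_S : ∀ a b : Letter, R a b → a ≠ b ∧ ¬ R b a := by decide

lemma phi_ne_nil : ∀ a : Letter, phi a ≠ [] := by decide

lemma chain_step : ∀ l : List Letter, List.Chain' R l →
    List.Chain' R (applyM phi l) := by
  intro l hl
  induction l with
  | nil => simp [applyM, List.Chain']
  | cons a l ih =>
    have hmain : applyM phi (a :: l) = phi a ++ applyM phi l := by
      simp [applyM]
    rw [hmain]
    refine List.isChain_append.mpr ⟨chain_phi a, ih hl.tail, ?_⟩
    intro x hx y hy
    cases l with
    | nil => simp [applyM] at hy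
    | cons b l' =>
      have hb : R a b := List.isChain_cons_cons.mp hl |>.1
      have : applyM phi (b :: l') = phi b ++ applyM phi l' := by simp [applyM]
      rw [this, List.head?_append_of_ne_nil _ (phi_ne_nil b)] at hy
      have hx' : (phi a).getLastD (X 0) = x := by
        rw [List.getLastD_eq_getLast?, Option.mem_def.mp hx]; rfl
      have hy' : (phi b).headD (X 0) = y := by
        rw [List.headD_eq_head?, Option.mem_def.mp hy]; rfl
      have := closure_S (a, b) hb
      rw [hx', hy'] at this
      exact this

lemma chain_iter (n : ℕ) : List.Chain' R ((applyM phi)^[n] [X 0]) := by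
  induction n with
  | zero => simp [List.Chain']
  | succ n ih => rw [Function.iterate_succ_apply']; exact chain_step _ ih

lemma key (w : ℕ → Letter) (hw : IsFixedPointWord w) (i : ℕ) :
    R (w i) (w (i + 1)) := by
  have hn : i + 2 ≤ 4 ^ (i + 2) := by
    calc i + 2 ≤ 2 ^ (i + 2) := by
          have := Nat.lt_two_pow_self (n := i + 2); omega
    _ ≤ 4 ^ (i + 2) := Nat.pow_le_pow_left (by norm_num) _
  set n := i + 2
  have h := hw n
  have hc : List.Chain' R (toListW w 0 (4 ^ n)) := by
    rw [h]; exact chain_iter n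
  have hlen : (toListW w 0 (4 ^ n)).length = 4 ^ n := by
    simp [toListW]
  rw [show List.Chain' R _ ↔ _ from List.isChain_iff_getElem] at hc
  have h1 : i < (toListW w 0 (4 ^ n)).length - 1 := by omega
  have := hc i (by omega)
  have hg : ∀ k (hk : k < (toListW w 0 (4 ^ n)).length),
      (toListW w 0 (4 ^ n))[k]'hk = w k := by
    intro k hk
    simp [toListW]
  rw [hg, hg] at this
  exact this

lemma factor_pair (w : ℕ → Letter) (hw : IsFixedPointWord w) (a b : Letter)
    (h : IsFactor [a, b] w) : R a b := by
  obtain ⟨i, hi⟩ := h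
  have h2 : toListW w i 2 = [w i, w (i + 1)] := by
    simp [toListW, List.range_succ]
  rw [show ([a,b] : List Letter).length = 2 from rfl, h2] at hi
  injection hi with ha hrest
  injection hrest with hb
  rw [← ha, ← hb]; exact key w hw i

theorem stmt8 (w : ℕ → Letter) (hw : IsFixedPointWord w) :
    (∀ a : Letter, ¬ IsFactor [a, a] w) ∧
    (∀ v : List Letter, IsFactor v w → v.length = 2 →
      ∃ a b : Letter, v = [a, b] ∧ ¬ IsFactor [b, a] w) := by
  constructor
  · intro a ⟨i, hi⟩
    have h2 : toListW w i 2 = [w i, w (i + 1)] := by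
      simp [toListW, List.range_succ]
    have : R a a := factor_pair w hw a a ⟨i, hi⟩
    exact (antisym_S a a this).1 rfl
  · intro v hv hlen
    match v, hlen with
    | [a, b], _ =>
      refine ⟨a, b, rfl, fun hba => ?_⟩
      exact (antisym_S a b (factor_pair w hw a b hv)).2
        (factor_pair w hw b a hba)
end

section
/- Let S ⊆ ℕ be a set such that for some d ≥ 1 and some a < d, S contains the infinite arithmetic progression {a + nd : n ≥ 0}. Suppose d is minimal with this property and let T = {a : 0 ≤ a < d, {a + nd : n ≥ 0} ⊆ S} = {i₁ < i₂ < ⋯ < i_p}, and set a_j = i_{j+1} − i_j for j = 1,…,p (with i_{p+1} = i₁ + d). If 1 ≤ m ≤ p−1 and (a_1,…,a_p) equals its cyclic shift by m, then S contains an infinite arithmetic progression with common difference a_1 + ⋯ + a_m < d starting below a_1 + ⋯ + a_m — contradicting minimality of d. Hence no nontrivial cyclic permutation of (a_1,…,a_p) equals (a_1,…,a_p). -/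
theorem stmt17 (S : Set ℕ) (d : ℕ) (hd : 1 ≤ d)
    -- `S` contains an infinite arithmetic progression of difference `d`
    -- starting below `d`
    (hex : ∃ a : ℕ, a < d ∧ ∀ n : ℕ, a + n * d ∈ S)
    -- `d` is minimal among differences of infinite arithmetic progressions in `S`
    (hmin : ∀ d' : ℕ, 1 ≤ d' → (∃ a : ℕ, ∀ n : ℕ, a + n * d' ∈ S) → d ≤ d')
    -- `i 0 < i 1 < ⋯ < i (p-1)` enumerates
    -- `T = {a < d | {a + nd : n ≥ 0} ⊆ S}`, with `i p = i 0 + d`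
    (p : ℕ) (hp : 0 < p) (i : ℕ → ℕ)
    (hmono : ∀ j j' : ℕ, j < j' → j' ≤ p → i j < i j')
    (hT : ∀ a : ℕ, (a < d ∧ ∀ n : ℕ, a + n * d ∈ S) ↔ ∃ j, j < p ∧ i j = a)
    (hip : i p = i 0 + d)
    -- the tuple of gaps `a_j = i_{j+1} - i_j`
    (g : ℕ → ℕ) (hg : ∀ j : ℕ, j < p → g j = i (j + 1) - i j)
    -- a nontrivial cyclic shift
    (m : ℕ) (hm1 : 1 ≤ m) (hmp : m ≤ p - 1) :
    ¬ (∀ j : ℕ, j < p → g ((j + m) % p) = g j) := by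
  intro hshift
  have hmp' : m < p := lt_of_le_of_lt hmp (Nat.pred_lt hp.ne')
  set D : ℕ := i m - i 0 with hDdef
  have hi0m : i 0 < i m := hmono 0 m hm1 hmp'.le
  have himp : i m < i 0 + d := by
    have := hmono m p hmp' le_rfl
    omega
  have hDd : D < d := by omega
  have hD1 : 1 ≤ D := by omega
  set I : ℕ → ℕ := fun k => i (k % p) + (k / p) * d with hIdef
  have hmemS : ∀ k, I k ∈ S := by
    intro k
    have hk : k % p < p := Nat.mod_lt _ hp
    have := (hT (i (k % p))).mpr ⟨k % p, hk, rfl⟩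
    exact this.2 (k / p)
  have hstep : ∀ k, I (k + 1) = I k + g (k % p) := by
    intro k
    have hr : k % p < p := Nat.mod_lt _ hp
    have hg' := hg (k % p) hr
    have hlt : i (k % p) < i (k % p + 1) := hmono _ _ (Nat.lt_succ_self _) hr
    have hk : k = (k / p) * p + k % p := by
      have h := Nat.div_add_mod k p
      rw [Nat.mul_comm] at h
      omega
    by_cases h1 : k % p + 1 < p
    · have hmod : (k + 1) % p = k % p + 1 := by
        conv_lhs => rw [show k + 1 = (k % p + 1) + (k / p) * p by omega]
        rw [Nat.add_mul_mod_self_right, Nat.mod_eq_of_lt h1]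
      have hdiv : (k + 1) / p = k / p := by
        conv_lhs => rw [show k + 1 = (k % p + 1) + (k / p) * p by omega]
        rw [Nat.add_mul_div_right _ _ hp, Nat.div_eq_of_lt h1]
        omega
      simp only [hIdef, hmod, hdiv]
      have h2 : i (k % p + 1) = i (k % p) + g (k % p) := by omega
      rw [h2]; ring
    · have hrp : k % p + 1 = p := by omega
      have hmod : (k + 1) % p = 0 := by
        conv_lhs => rw [show k + 1 = (k % p + 1) + (k / p) * p by omega]
        rw [Nat.add_mul_mod_self_right, hrp, Nat.mod_self]
      have hdiv : (k + 1) / p = k / p + 1 := by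
        conv_lhs => rw [show k + 1 = (k % p + 1) + (k / p) * p by omega]
        rw [Nat.add_mul_div_right _ _ hp, hrp, Nat.div_self hp]
        omega
      simp only [hIdef, hmod, hdiv]
      have hip' : i (k % p + 1) = i 0 + d := by rw [hrp, hip]
      have h3 : i (k % p) + g (k % p) = i 0 + d := by omega
      rw [show (k / p + 1) * d = k / p * d + d by ring]
      omega
  have hshiftk : ∀ k, I (k + m) = I k + D := by
    intro k
    induction k with
    | zero =>
      have h1 : I (0 + m) = i m := by
        simp only [hIdef, Nat.zero_add, Nat.mod_eq_of_lt hmp', Nat.div_eq_of_lt hmp',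
          Nat.zero_mul, Nat.add_zero]
      have h2 : I 0 = i 0 := by simp [hIdef]
      omega
    | succ n ih =>
      have hnp : n % p < p := Nat.mod_lt _ hp
      have e1 : I (n + 1 + m) = I (n + m) + g ((n + m) % p) := by
        rw [show n + 1 + m = (n + m) + 1 by omega]; exact hstep (n + m)
      have e2 : g ((n + m) % p) = g (n % p) := by
        have h := hshift (n % p) hnp
        rw [← h]
        congr 1
        conv_lhs => rw [Nat.add_mod]
        rw [Nat.mod_eq_of_lt hmp']
      have e3 := hstep n
      omega
  have hI0 : I 0 = i 0 := by simp [hIdef]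
  have hprog : ∀ n : ℕ, I (n * m) = i 0 + n * D := by
    intro n
    induction n with
    | zero => simpa using hI0
    | succ n ih =>
      have : I ((n + 1) * m) = I (n * m) + D := by
        rw [show (n + 1) * m = n * m + m by ring]
        exact hshiftk (n * m)
      rw [this, ih]; ring
  have hle := hmin D hD1 ⟨i 0, fun n => by rw [← hprog n]; exact hmemS _⟩
  omega
end
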